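/- Let 1≤p<∞ and φ∈𝒢_p(𝔻) with lim_{k→∞} 2^{−kd/p}φ(2^k)=0. Then the natural embedding ℓ_p(ℤ^d) ↪ m_{φ,p}(ℤ^d) is strictly singular: for every infinite-dimensional closed subspace X ⊂ ℓ_p(ℤ^d), inf{‖x|m_{φ,p}‖ : x∈X, ‖x|ℓ_p‖=1} = 0. -/

import Mathlib

/-!
On the levels `j ≥ J` the Morrey quasi-norm is at most `sup_{j ≥ J} φ(2^j) 2^{-jd/p}` times the
`ℓ^p` norm, which is small by assumption; on the levels `j < J` a cube has `2^{jd}` points, so the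
term is at most `φ(2^J)` times the sup norm. It therefore suffices that the embedding
`ℓ^p ↪ ℓ^∞` is strictly singular, which is a gliding hump argument: an infinite-dimensional
subspace contains unit vectors `x_0, …, x_{N-1}` whose `ℓ^p` mass outside pairwise disjoint finite
sets `S_i` is at most `η ≤ 1/N` (take `x_i` vanishing on `S_0 ∪ … ∪ S_{i-1}`). Their sum has sup
norm at most `2` but `ℓ^p` norm at least `(N/2)^{1/p} - 1`.
-/

open ENNReal Filter

noncomputable section

/-- `Q_{0,k} ⊂ Q_{-j,m}` for dyadic cubes `Q_{-j,m} = 2^j([0,1)^d + m)`. -/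
def inCube (d j : ℕ) (m k : Fin d → ℤ) : Prop :=
  ∀ i, 2 ^ j * m i ≤ k i ∧ k i < 2 ^ j * (m i + 1)

/-- the local quantity `(Σ_{k : Q_{0,k} ⊂ Q_{-j,m}} |λ_k|^p)^{1/p}`, in `ℝ≥0∞`. -/
def localSum (d : ℕ) (p : ℝ) (j : ℕ) (m : Fin d → ℤ)
    (lam : (Fin d → ℤ) → ℂ) : ℝ≥0∞ :=
  (∑' k : {k : Fin d → ℤ // inCube d j m k}, ENNReal.ofReal ‖lam k.1‖ ^ p) ^ (1 / p)

/-- quasi-norm of the generalised Morrey sequence space `m_{φ,p}(ℤ^d)`;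
`φ j` stands for `φ(2^j)`. -/
def mNorm (d : ℕ) (p : ℝ) (φ : ℕ → ℝ) (lam : (Fin d → ℤ) → ℂ) : ℝ≥0∞ :=
  ⨆ (j : ℕ) (m : Fin d → ℤ),
    ENNReal.ofReal (φ j) * (2 : ℝ≥0∞) ^ (-((j : ℝ) * d) / p) * localSum d p j m lam

def ellpNorm (d : ℕ) (p : ℝ) (lam : (Fin d → ℤ) → ℂ) : ℝ≥0∞ :=
  (∑' k : Fin d → ℤ, ENNReal.ofReal ‖lam k‖ ^ p) ^ (1 / p)

def linftyNorm (d : ℕ) (lam : (Fin d → ℤ) → ℂ) : ℝ≥0∞ :=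
  ⨆ k : Fin d → ℤ, ENNReal.ofReal ‖lam k‖

/-- the class `𝒢_p(𝔻)`: `φ(2^k)` is positive, nondecreasing and
`2^{-kd/p} φ(2^k)` is nonincreasing. -/
def Gp (d : ℕ) (p : ℝ) (φ : ℕ → ℝ) : Prop :=
  (∀ k, 0 < φ k) ∧
  ∀ j k : ℕ, j ≤ k → φ j ≤ φ k ∧ φ k ≤ φ j * 2 ^ (((k : ℝ) - j) * d / p)

section PNorm

variable {ι γ : Type*} {p : ℝ}

def pNorm (p : ℝ) (f : ι → ℝ≥0∞) : ℝ≥0∞ := (∑' k, f k ^ p) ^ (1 / p)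

lemma pNorm_rpow (hp : 0 < p) (f : ι → ℝ≥0∞) : pNorm p f ^ p = ∑' k, f k ^ p := by
  rw [pNorm, one_div, ENNReal.rpow_inv_rpow hp.ne']

lemma pNorm_mono (hp : 0 < p) {f g : ι → ℝ≥0∞} (h : f ≤ g) : pNorm p f ≤ pNorm p g :=
  ENNReal.rpow_le_rpow (ENNReal.tsum_le_tsum fun k => ENNReal.rpow_le_rpow (h k) hp.le)
    (by positivity)

lemma le_pNorm (hp : 0 < p) (f : ι → ℝ≥0∞) (k : ι) : f k ≤ pNorm p f :=
  calc f k = (f k ^ p) ^ (1 / p) := by rw [one_div, ENNReal.rpow_rpow_inv hp.ne']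
    _ ≤ pNorm p f := ENNReal.rpow_le_rpow (ENNReal.le_tsum k) (by positivity)

lemma pNorm_const_mul (hp : 0 < p) (a : ℝ≥0∞) (f : ι → ℝ≥0∞) :
    pNorm p (fun k => a * f k) = a * pNorm p f := by
  simp only [pNorm, ENNReal.mul_rpow_of_nonneg _ _ hp.le, ENNReal.tsum_mul_left]
  rw [ENNReal.mul_rpow_of_nonneg _ _ (by positivity), ← ENNReal.rpow_mul,
    mul_one_div_cancel hp.ne', ENNReal.rpow_one]

lemma pNorm_add_le (hp : 1 ≤ p) (f g : ι → ℝ≥0∞) : pNorm p (f + g) ≤ pNorm p f + pNorm p g := by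
  have hp0 : 0 < p := zero_lt_one.trans_le hp
  rw [← ENNReal.rpow_le_rpow_iff hp0, pNorm_rpow hp0, ENNReal.tsum_eq_iSup_sum]
  refine iSup_le fun s => ?_
  rw [← ENNReal.rpow_le_rpow_iff (one_div_pos.2 hp0), ← ENNReal.rpow_mul,
    mul_one_div_cancel hp0.ne', ENNReal.rpow_one]
  refine (ENNReal.Lp_add_le s f g hp).trans (add_le_add ?_ ?_) <;>
    exact ENNReal.rpow_le_rpow (ENNReal.sum_le_tsum s) (by positivity)

lemma pNorm_sum_le (hp : 1 ≤ p) (t : Finset γ) (f : γ → ι → ℝ≥0∞) :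
    pNorm p (∑ i ∈ t, f i) ≤ ∑ i ∈ t, pNorm p (f i) := by
  have hp0 : 0 < p := zero_lt_one.trans_le hp
  refine Finset.le_sum_of_subadditive (pNorm p) ?_ (pNorm_add_le hp) t f
  simp [pNorm, ENNReal.zero_rpow_of_pos hp0, hp0]

lemma Set.indicator_rpow_apply (hp : 0 < p) (s : Set ι) (f : ι → ℝ≥0∞) (k : ι) :
    s.indicator f k ^ p = s.indicator (fun k => f k ^ p) k := by
  by_cases hk : k ∈ s <;> simp [hk, ENNReal.zero_rpow_of_pos hp]

lemma pNorm_indicator_rpow_add_compl (hp : 0 < p) (s : Set ι) (f : ι → ℝ≥0∞) :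
    pNorm p (s.indicator f) ^ p + pNorm p (sᶜ.indicator f) ^ p = pNorm p f ^ p := by
  simp only [pNorm_rpow hp, ← ENNReal.tsum_add, Set.indicator_rpow_apply hp,
    Set.indicator_self_add_compl_apply]

lemma exists_finset_pNorm_indicator_compl_lt (hp : 0 < p) {f : ι → ℝ≥0∞} (hf : pNorm p f ≠ ⊤)
    {η : ℝ≥0∞} (hη : 0 < η) : ∃ S : Finset ι, pNorm p ((S : Set ι)ᶜ.indicator f) < η := by
  have hsum : ∑' k, f k ^ p ≠ ⊤ := pNorm_rpow hp f ▸ ENNReal.rpow_ne_top_of_nonneg hp.le hf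
  obtain ⟨S, hS⟩ := ((tendsto_order.1 (ENNReal.tendsto_tsum_compl_atTop_zero hsum)).2
    (η ^ p) (ENNReal.rpow_pos_of_nonneg hη hp.le)).exists
  refine ⟨S, ?_⟩
  rw [← ENNReal.rpow_lt_rpow_iff hp, pNorm_rpow hp]
  simp only [Set.indicator_rpow_apply hp, ← tsum_subtype]
  exact hS

lemma ENNReal.sum_rpow_le_rpow_sum (hp : 1 ≤ p) (t : Finset γ) (f : γ → ℝ≥0∞) :
    ∑ i ∈ t, f i ^ p ≤ (∑ i ∈ t, f i) ^ p := by
  induction t using Finset.cons_induction with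
  | empty => simp [ENNReal.zero_rpow_of_pos (zero_lt_one.trans_le hp)]
  | cons a t ha ih =>
    rw [Finset.sum_cons, Finset.sum_cons]
    exact (add_le_add_right ih _).trans (ENNReal.add_rpow_le_rpow_add _ _ hp)

end PNorm

section AlmostDisjoint

variable {ι γ E : Type*} [NormedAddCommGroup E] {p : ℝ} {η : ℝ≥0∞}
  {x : γ → ι → E} {S : γ → Set ι} {t : Finset γ}

lemma enorm_sum_le_one_add (hp : 0 < p) (hS : (t : Set γ).PairwiseDisjoint S)
    (hx : ∀ i ∈ t, pNorm p (‖x i ·‖ₑ) ≤ 1)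
    (htail : ∀ i ∈ t, pNorm p ((S i)ᶜ.indicator (‖x i ·‖ₑ)) ≤ η) (k : ι) :
    ‖∑ i ∈ t, x i k‖ₑ ≤ 1 + t.card * η := by
  have hhead : ∑ i ∈ t, (S i).indicator (‖x i ·‖ₑ) k ≤ 1 :=
    calc ∑ i ∈ t, (S i).indicator (‖x i ·‖ₑ) k
        ≤ ∑ i ∈ t, (S i).indicator 1 k := Finset.sum_le_sum fun i hi =>
          Set.indicator_le_indicator ((le_pNorm hp _ k).trans (hx i hi))
      _ = (⋃ i ∈ t, S i).indicator 1 k := (Finset.indicator_biUnion_apply t S hS k).symm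
      _ ≤ 1 := Set.indicator_apply_le' (fun _ => le_rfl) (fun _ => zero_le_one)
  have htail' : ∑ i ∈ t, (S i)ᶜ.indicator (‖x i ·‖ₑ) k ≤ t.card * η := by
    rw [← nsmul_eq_mul]
    exact Finset.sum_le_card_nsmul _ _ _ fun i hi => (le_pNorm hp _ k).trans (htail i hi)
  calc ‖∑ i ∈ t, x i k‖ₑ ≤ ∑ i ∈ t, ‖x i k‖ₑ := enorm_sum_le _ _
    _ = ∑ i ∈ t, (S i).indicator (‖x i ·‖ₑ) k + ∑ i ∈ t, (S i)ᶜ.indicator (‖x i ·‖ₑ) k := by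
      simp only [← Finset.sum_add_distrib, Set.indicator_self_add_compl_apply]
    _ ≤ 1 + t.card * η := add_le_add hhead htail'

lemma sum_indicator_le_enorm_sum_add (hS : (t : Set γ).PairwiseDisjoint S) (k : ι) :
    ∑ i ∈ t, (S i).indicator (‖x i ·‖ₑ) k
      ≤ ‖∑ i ∈ t, x i k‖ₑ + ∑ i ∈ t, (S i)ᶜ.indicator (‖x i ·‖ₑ) k := by
  classical
  by_cases h : ∃ i₀ ∈ t, k ∈ S i₀
  · obtain ⟨i₀, hi₀, hk⟩ := h
    have hout : ∀ i ∈ t, i ≠ i₀ → k ∉ S i := fun i hi hne hki =>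
      Set.disjoint_left.1 (hS hi hi₀ hne) hki hk
    rw [Finset.sum_eq_single_of_mem i₀ hi₀ fun i hi hne =>
      Set.indicator_of_notMem (hout i hi hne) _, Set.indicator_of_mem hk]
    calc ‖x i₀ k‖ₑ = ‖∑ i ∈ t, x i k - ∑ i ∈ t.erase i₀, x i k‖ₑ := by
          rw [← Finset.add_sum_erase t _ hi₀, add_sub_cancel_right]
      _ ≤ ‖∑ i ∈ t, x i k‖ₑ + ∑ i ∈ t.erase i₀, ‖x i k‖ₑ :=
          enorm_sub_le.trans (add_le_add_right (enorm_sum_le _ _) _)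
      _ = ‖∑ i ∈ t, x i k‖ₑ + ∑ i ∈ t.erase i₀, (S i)ᶜ.indicator (‖x i ·‖ₑ) k := by
          refine congrArg _ (Finset.sum_congr rfl fun i hi => ?_)
          exact (Set.indicator_of_mem (Set.mem_compl
            (hout i (Finset.mem_of_mem_erase hi) (Finset.ne_of_mem_erase hi))) (‖x i ·‖ₑ)).symm
      _ ≤ ‖∑ i ∈ t, x i k‖ₑ + ∑ i ∈ t, (S i)ᶜ.indicator (‖x i ·‖ₑ) k :=
          add_le_add_right (Finset.sum_le_sum_of_subset (Finset.erase_subset _ _)) _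
  · push Not at h
    rw [Finset.sum_eq_zero fun i hi => Set.indicator_of_notMem (h i hi) _]
    exact zero_le

lemma rpow_le_pNorm_sum_add (hp : 1 ≤ p) (hS : (t : Set γ).PairwiseDisjoint S)
    (hx : ∀ i ∈ t, pNorm p (‖x i ·‖ₑ) = 1)
    (htail : ∀ i ∈ t, pNorm p ((S i)ᶜ.indicator (‖x i ·‖ₑ)) ≤ η) :
    (t.card * (1 - η ^ p)) ^ (1 / p) ≤ pNorm p (‖∑ i ∈ t, x i ·‖ₑ) + t.card * η := by
  have hp0 : 0 < p := zero_lt_one.trans_le hp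
  set head : γ → ι → ℝ≥0∞ := fun i => (S i).indicator (‖x i ·‖ₑ)
  set tail : γ → ι → ℝ≥0∞ := fun i => (S i)ᶜ.indicator (‖x i ·‖ₑ)
  have hmass : ∀ i ∈ t, 1 - η ^ p ≤ ∑' k, head i k ^ p := fun i hi => by
    have h := pNorm_indicator_rpow_add_compl hp0 (S i) (‖x i ·‖ₑ)
    rw [hx i hi, ENNReal.one_rpow, pNorm_rpow hp0] at h
    rw [tsub_le_iff_right, ← h]
    exact add_le_add_right (ENNReal.rpow_le_rpow (htail i hi) hp0.le) _
  have hheads : (t.card * (1 - η ^ p) : ℝ≥0∞) ≤ ∑' k, (∑ i ∈ t, head i) k ^ p :=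
    calc (t.card * (1 - η ^ p) : ℝ≥0∞) ≤ ∑ i ∈ t, ∑' k, head i k ^ p := by
          rw [← nsmul_eq_mul, ← Finset.sum_const]
          exact Finset.sum_le_sum hmass
      _ = ∑' k, ∑ i ∈ t, head i k ^ p :=
          (Summable.tsum_finsetSum fun _ _ => ENNReal.summable).symm
      _ ≤ ∑' k, (∑ i ∈ t, head i) k ^ p := ENNReal.tsum_le_tsum fun k => by
          rw [Finset.sum_apply]
          exact ENNReal.sum_rpow_le_rpow_sum hp t _
  calc (t.card * (1 - η ^ p) : ℝ≥0∞) ^ (1 / p) ≤ pNorm p (∑ i ∈ t, head i) :=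
        ENNReal.rpow_le_rpow hheads (by positivity)
    _ ≤ pNorm p ((‖∑ i ∈ t, x i ·‖ₑ) + ∑ i ∈ t, tail i) := pNorm_mono hp0 fun k => by
        simpa only [Finset.sum_apply, Pi.add_apply]
          using sum_indicator_le_enorm_sum_add hS k
    _ ≤ pNorm p (‖∑ i ∈ t, x i ·‖ₑ) + ∑ i ∈ t, pNorm p (tail i) :=
        (pNorm_add_le hp _ _).trans (add_le_add_right (pNorm_sum_le hp t tail) _)
    _ ≤ pNorm p (‖∑ i ∈ t, x i ·‖ₑ) + t.card * η := by
        rw [← nsmul_eq_mul]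
        exact add_le_add_right (Finset.sum_le_card_nsmul _ _ _ htail) _

end AlmostDisjoint

lemma exists_mem_ne_zero_forall_mem_eq_zero {ι K : Type*} [Field K] {X : Submodule K (ι → K)}
    (hX : ¬ Module.Finite K X) (F : Finset ι) : ∃ z ∈ X, z ≠ 0 ∧ ∀ k ∈ F, z k = 0 := by
  by_contra! h
  refine hX (Module.Finite.of_injective
    (LinearMap.funLeft K K ((↑) : F → ι) ∘ₗ X.subtype) fun z w hzw => ?_)
  by_contra hne
  obtain ⟨k, hk, hzwk⟩ := h (z - w) (X.sub_mem z.2 w.2) (sub_ne_zero.2 (Subtype.coe_ne_coe.2 hne))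
  exact hzwk (sub_eq_zero.2 (congrFun hzw ⟨k, hk⟩))

lemma RCLike.exists_enorm_eq (𝕜 : Type*) [RCLike 𝕜] {a : ℝ≥0∞} (ha : a ≠ ⊤) : ∃ c : 𝕜, ‖c‖ₑ = a :=
  ⟨(a.toReal : 𝕜), by
    rw [← ofReal_norm, RCLike.norm_ofReal, abs_of_nonneg ENNReal.toReal_nonneg,
      ENNReal.ofReal_toReal ha]⟩

section Blocks

variable {ι 𝕜 : Type*} [RCLike 𝕜] {p : ℝ} {X : Submodule 𝕜 (ι → 𝕜)}

lemma exists_smul_pNorm_eq_one (hp : 0 < p) {y : ι → 𝕜} (h0 : pNorm p (‖y ·‖ₑ) ≠ 0)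
    (htop : pNorm p (‖y ·‖ₑ) ≠ ⊤) :
    ∃ c : 𝕜, ‖c‖ₑ = (pNorm p (‖y ·‖ₑ))⁻¹ ∧ pNorm p (‖(c • y) ·‖ₑ) = 1 := by
  obtain ⟨c, hc⟩ := RCLike.exists_enorm_eq 𝕜 (ENNReal.inv_ne_top.2 h0)
  refine ⟨c, hc, ?_⟩
  simp only [Pi.smul_apply, enorm_smul]
  rw [pNorm_const_mul hp, hc, ENNReal.inv_mul_cancel h0 htop]

lemma exists_block (hp : 0 < p) (hX : ∀ x ∈ X, pNorm p (‖x ·‖ₑ) ≠ ⊤)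
    (hXinf : ¬ Module.Finite 𝕜 X) (F : Finset ι) {η : ℝ≥0∞} (hη : 0 < η) :
    ∃ x ∈ X, ∃ S : Finset ι, pNorm p (‖x ·‖ₑ) = 1 ∧ Disjoint S F ∧
      pNorm p ((S : Set ι)ᶜ.indicator (‖x ·‖ₑ)) ≤ η := by
  classical
  obtain ⟨z, hzX, hz0, hzF⟩ := exists_mem_ne_zero_forall_mem_eq_zero hXinf F
  obtain ⟨k₀, hk₀⟩ := Function.ne_iff.1 hz0
  have hz : pNorm p (‖z ·‖ₑ) ≠ 0 :=
    (lt_of_lt_of_le (enorm_pos.2 hk₀) (le_pNorm hp _ k₀)).ne'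
  obtain ⟨c, -, hcz⟩ := exists_smul_pNorm_eq_one hp hz (hX z hzX)
  obtain ⟨S, hS⟩ := exists_finset_pNorm_indicator_compl_lt hp (hcz ▸ ENNReal.one_ne_top) hη
  refine ⟨c • z, X.smul_mem c hzX, S \ F, hcz, Finset.sdiff_disjoint, le_trans ?_ hS.le⟩
  -- `c • z` vanishes on `F`, so removing `F` from `S` does not change the tail
  refine pNorm_mono hp fun k => ?_
  by_cases hkF : k ∈ F
  · exact Set.indicator_apply_le' (fun _ => by simp [hzF k hkF]) fun _ => zero_le
  · by_cases hkS : k ∈ S <;> simp [hkF, hkS]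

lemma exists_blocks (hp : 0 < p) (hX : ∀ x ∈ X, pNorm p (‖x ·‖ₑ) ≠ ⊤)
    (hXinf : ¬ Module.Finite 𝕜 X) {η : ℝ≥0∞} (hη : 0 < η) :
    ∃ (x : ℕ → ι → 𝕜) (S : ℕ → Finset ι), Pairwise (fun i j => Disjoint (S i) (S j)) ∧
      ∀ i, x i ∈ X ∧ pNorm p (‖x i ·‖ₑ) = 1 ∧ pNorm p ((S i : Set ι)ᶜ.indicator (‖x i ·‖ₑ)) ≤ η := by
  classical
  choose x hxX S hx hSF htail using fun F : Finset ι => exists_block hp hX hXinf F hη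
  -- `F n` collects the sets of the first `n` blocks, and block `n` is chosen off `F n`
  let F : ℕ → Finset ι := fun n => Nat.rec ∅ (fun _ G => G ∪ S G) n
  have hF : Monotone F := monotone_nat_of_le_succ fun n => Finset.subset_union_left
  refine ⟨fun n => x (F n), fun n => S (F n), (pairwise_disjoint_on _).2 fun m n hmn => ?_,
    fun n => ⟨hxX _, hx _, htail _⟩⟩
  exact (hSF (F n)).symm.mono_left (Finset.subset_union_right.trans (hF hmn))

end Blocks

section StrictlySingular

variable {ι 𝕜 : Type*} [RCLike 𝕜] {p : ℝ} {X : Submodule 𝕜 (ι → 𝕜)}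

lemma exists_mem_enorm_le_two_le_pNorm (hp : 1 ≤ p) (hX : ∀ x ∈ X, pNorm p (‖x ·‖ₑ) ≠ ⊤)
    (hXinf : ¬ Module.Finite 𝕜 X) {B : ℝ≥0∞} (hB : B ≠ ⊤) :
    ∃ y ∈ X, (∀ k, ‖y k‖ₑ ≤ 2) ∧ B ≤ pNorm p (‖y ·‖ₑ) := by
  have hp0 : 0 < p := zero_lt_one.trans_le hp
  obtain ⟨N, hN⟩ : ∃ N : ℕ, (B + 1) ^ p * 2 < N := ENNReal.exists_nat_gt <|
    ENNReal.mul_ne_top (ENNReal.rpow_ne_top_of_nonneg hp0.le (by finiteness)) ENNReal.ofNat_ne_top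
  set η : ℝ≥0∞ := min (N : ℝ≥0∞)⁻¹ 2⁻¹
  have hη : 0 < η := lt_min (ENNReal.inv_pos.2 (ENNReal.natCast_ne_top N))
    (ENNReal.inv_pos.2 ENNReal.ofNat_ne_top)
  have hNη : (N : ℝ≥0∞) * η ≤ 1 :=
    (mul_le_mul_right (min_le_left _ _) _).trans (ENNReal.mul_inv_le_one _)
  have hηp : η ^ p ≤ 2⁻¹ :=
    calc η ^ p ≤ η ^ (1 : ℝ) :=
          ENNReal.rpow_le_rpow_of_exponent_ge ((min_le_right _ _).trans (by norm_num)) hp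
      _ ≤ 2⁻¹ := (ENNReal.rpow_one η).trans_le (min_le_right _ _)
  obtain ⟨x, S, hS, hx⟩ := exists_blocks hp0 hX hXinf hη
  have hdisj : ((Finset.range N : Finset ℕ) : Set ℕ).PairwiseDisjoint fun i => (S i : Set ι) :=
    fun i _ j _ hij => Finset.disjoint_coe.2 (hS hij)
  refine ⟨∑ i ∈ Finset.range N, x i, X.sum_mem fun i _ => (hx i).1, fun k => ?_, ?_⟩
  · have hsup := enorm_sum_le_one_add hp0 hdisj (fun i _ => (hx i).2.1.le) (fun i _ => (hx i).2.2) k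
    rw [Finset.card_range] at hsup
    rw [Finset.sum_apply, ← one_add_one_eq_two]
    exact hsup.trans (by gcongr)
  · have hlow := rpow_le_pNorm_sum_add hp hdisj (fun i _ => (hx i).2.1) (fun i _ => (hx i).2.2)
    rw [Finset.card_range] at hlow
    have hmass : (B + 1) ^ p ≤ N * (1 - η ^ p) :=
      calc (B + 1) ^ p ≤ N * 2⁻¹ := by
            rw [← div_eq_mul_inv, ENNReal.le_div_iff_mul_le (by simp) (by simp)]
            exact hN.le
        _ ≤ N * (1 - η ^ p) := by
            rw [← ENNReal.one_sub_inv_two]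
            gcongr
    have hB1 : B + 1 ≤ (N * (1 - η ^ p)) ^ (1 / p) :=
      calc B + 1 = ((B + 1) ^ p) ^ (1 / p) := by rw [one_div, ENNReal.rpow_rpow_inv hp0.ne']
        _ ≤ (N * (1 - η ^ p)) ^ (1 / p) := by gcongr
    simp only [Finset.sum_apply]
    exact (ENNReal.add_le_add_iff_right ENNReal.one_ne_top).1 (hB1.trans (hlow.trans (by gcongr)))

theorem exists_pNorm_eq_one_forall_enorm_le (hp : 1 ≤ p) (hX : ∀ x ∈ X, pNorm p (‖x ·‖ₑ) ≠ ⊤)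
    (hXinf : ¬ Module.Finite 𝕜 X) {δ : ℝ≥0∞} (hδ : 0 < δ) :
    ∃ x ∈ X, pNorm p (‖x ·‖ₑ) = 1 ∧ ∀ k, ‖x k‖ₑ ≤ δ := by
  have hp0 : 0 < p := zero_lt_one.trans_le hp
  obtain ⟨y, hyX, hy2, hyB⟩ := exists_mem_enorm_le_two_le_pNorm hp hX hXinf (B := 2 / δ + 1)
    (ENNReal.add_ne_top.2 ⟨ENNReal.div_ne_top ENNReal.ofNat_ne_top hδ.ne', ENNReal.one_ne_top⟩)
  have hy0 : pNorm p (‖y ·‖ₑ) ≠ 0 := (zero_lt_one.trans_le (le_add_self.trans hyB)).ne'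
  obtain ⟨c, hc, hcy⟩ := exists_smul_pNorm_eq_one hp0 hy0 (hX y hyX)
  refine ⟨c • y, X.smul_mem c hyX, hcy, fun k => ?_⟩
  calc ‖(c • y) k‖ₑ = (pNorm p (‖y ·‖ₑ))⁻¹ * ‖y k‖ₑ := by rw [Pi.smul_apply, enorm_smul, hc]
    _ ≤ 2 / pNorm p (‖y ·‖ₑ) := by
        rw [ENNReal.div_eq_inv_mul]
        exact mul_le_mul_right (hy2 k) _
    _ ≤ 2 / (2 / δ) := ENNReal.div_le_div_left (le_self_add.trans hyB) 2
    _ = δ := ENNReal.div_div_cancel two_ne_zero ENNReal.ofNat_ne_top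

end StrictlySingular

section Morrey

variable {d : ℕ} {p : ℝ}

lemma ellpNorm_eq_pNorm (lam : (Fin d → ℤ) → ℂ) : ellpNorm d p lam = pNorm p (‖lam ·‖ₑ) := by
  simp only [ellpNorm, pNorm, ofReal_norm]

lemma localSum_le_ellpNorm (hp : 0 < p) (j : ℕ) (m : Fin d → ℤ) (lam : (Fin d → ℤ) → ℂ) :
    localSum d p j m lam ≤ ellpNorm d p lam :=
  ENNReal.rpow_le_rpow (ENNReal.tsum_comp_le_tsum_of_injective Subtype.val_injective _)
    (by positivity)

lemma natCard_inCube (j : ℕ) (m : Fin d → ℤ) : Nat.card {k // inCube d j m k} = 2 ^ (j * d) :=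
  calc Nat.card {k // inCube d j m k}
      = Nat.card ((i : Fin d) → Set.Ico (2 ^ j * m i) (2 ^ j * (m i + 1))) :=
        Nat.card_congr (Equiv.subtypePiEquivPi (p := fun i b => b ∈ Set.Ico _ _))
    _ = ∏ _i : Fin d, 2 ^ j := by
        rw [Nat.card_pi]
        refine Finset.prod_congr rfl fun i _ => ?_
        have h : (Fintype.card (Set.Ico (2 ^ j * m i) (2 ^ j * (m i + 1))) : ℤ) = 2 ^ j := by
          rw [Int.card_fintype_Ico_of_le _ _ (by simp [mul_add])]
          ring
        rw [Nat.card_eq_fintype_card]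
        exact_mod_cast h
    _ = 2 ^ (j * d) := by simp [pow_mul]

lemma localSum_le_of_forall_enorm_le (hp : 0 < p) {lam : (Fin d → ℤ) → ℂ} {c : ℝ≥0∞}
    (hc : ∀ k, ‖lam k‖ₑ ≤ c) (j : ℕ) (m : Fin d → ℤ) :
    localSum d p j m lam ≤ 2 ^ ((j : ℝ) * d / p) * c := by
  have : Finite {k // inCube d j m k} := Nat.finite_of_card_ne_zero (by simp [natCard_inCube])
  calc localSum d p j m lam ≤ (∑' _k : {k // inCube d j m k}, c ^ p) ^ (1 / p) := by
        refine ENNReal.rpow_le_rpow (ENNReal.tsum_le_tsum fun k => ?_) (by positivity)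
        exact ENNReal.rpow_le_rpow ((ofReal_norm _).trans_le (hc k)) hp.le
    _ = ((2 : ℝ≥0∞) ^ ((j * d : ℕ) : ℝ) * c ^ p) ^ (1 / p) := by
        rw [ENNReal.tsum_const, ENat.card_eq_coe_natCard, natCard_inCube, ENNReal.rpow_natCast]
        norm_cast
    _ = 2 ^ ((j : ℝ) * d / p) * c := by
        rw [ENNReal.mul_rpow_of_nonneg _ _ (by positivity), ← ENNReal.rpow_mul, ← ENNReal.rpow_mul,
          mul_one_div_cancel hp.ne', ENNReal.rpow_one]
        push_cast
        ring_nf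

lemma mNorm_le_max (hp : 0 < p) {φ : ℕ → ℝ} (hφ : Monotone φ) {J : ℕ} {ε c : ℝ≥0∞}
    (hJ : ∀ j, J ≤ j → ENNReal.ofReal (φ j) * 2 ^ (-((j : ℝ) * d) / p) ≤ ε)
    {lam : (Fin d → ℤ) → ℂ} (hc : ∀ k, ‖lam k‖ₑ ≤ c) :
    mNorm d p φ lam ≤ max (ε * ellpNorm d p lam) (ENNReal.ofReal (φ J) * c) := by
  refine iSup₂_le fun j m => ?_
  rcases le_total J j with hJj | hjJ
  · exact le_max_of_le_left (mul_le_mul' (hJ j hJj) (localSum_le_ellpNorm hp j m lam))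
  · have hcancel : (2 : ℝ≥0∞) ^ (-((j : ℝ) * d) / p) * 2 ^ ((j : ℝ) * d / p) = 1 := by
      rw [← ENNReal.rpow_add _ _ two_ne_zero ENNReal.ofNat_ne_top, neg_div, neg_add_cancel,
        ENNReal.rpow_zero]
    refine le_max_of_le_right ?_
    calc ENNReal.ofReal (φ j) * 2 ^ (-((j : ℝ) * d) / p) * localSum d p j m lam
        ≤ ENNReal.ofReal (φ j) * 2 ^ (-((j : ℝ) * d) / p) * (2 ^ ((j : ℝ) * d / p) * c) := by
          gcongr
          exact localSum_le_of_forall_enorm_le hp hc j m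
      _ = ENNReal.ofReal (φ j) * c := by rw [mul_assoc, ← mul_assoc (2 ^ _), hcancel, one_mul]
      _ ≤ ENNReal.ofReal (φ J) * c := by gcongr; exact hφ hjJ

end Morrey

theorem stmt_18_general (d : ℕ) (p : ℝ) (hp : 1 ≤ p)
    (φ : ℕ → ℝ) (hGp : Gp d p φ)
    (hlim : Tendsto (fun k : ℕ => φ k * (2 : ℝ) ^ (-((k : ℝ) * d) / p))
      atTop (nhds 0)) :
    ∀ X : Submodule ℂ ((Fin d → ℤ) → ℂ),
      (∀ lam ∈ X, ellpNorm d p lam < ⊤) →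
      (∀ lam : (Fin d → ℤ) → ℂ, ellpNorm d p lam < ⊤ →
        (∀ ε : ℝ≥0∞, 0 < ε → ∃ x ∈ X, ellpNorm d p (lam - x) < ε) → lam ∈ X) →
      ¬ Module.Finite ℂ X →
      ∀ ε : ℝ≥0∞, 0 < ε →
        ∃ x ∈ X, ellpNorm d p x = 1 ∧ mNorm d p φ x < ε := by
  intro X hXfin _ hXinf ε hε
  have hp0 : 0 < p := zero_lt_one.trans_le hp
  obtain ⟨ε', hε'0, hε'ε⟩ := exists_between hε
  have hweight : ∀ᶠ j in atTop, ENNReal.ofReal (φ j) * 2 ^ (-((j : ℝ) * d) / p) < ε' := by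
    have h := ENNReal.tendsto_ofReal hlim
    rw [ENNReal.ofReal_zero] at h
    filter_upwards [(tendsto_order.1 h).2 ε' hε'0] with j hj
    rwa [ENNReal.ofReal_mul' (by positivity), ← ENNReal.ofReal_rpow_of_pos two_pos,
      ENNReal.ofReal_ofNat] at hj
  obtain ⟨J, hJ⟩ := eventually_atTop.1 hweight
  obtain ⟨x, hxX, hx1, hxδ⟩ := exists_pNorm_eq_one_forall_enorm_le hp
    (fun x hx => ellpNorm_eq_pNorm x ▸ (hXfin x hx).ne) hXinf
    (ENNReal.div_pos hε'0.ne' ENNReal.ofReal_ne_top : 0 < ε' / ENNReal.ofReal (φ J))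
  rw [← ellpNorm_eq_pNorm] at hx1
  refine ⟨x, hxX, hx1, lt_of_le_of_lt ?_ hε'ε⟩
  calc mNorm d p φ x
      ≤ max (ε' * ellpNorm d p x) (ENNReal.ofReal (φ J) * (ε' / ENNReal.ofReal (φ J))) :=
        mNorm_le_max hp0 (fun _ _ h => (hGp.2 _ _ h).1) (fun j hj => (hJ j hj).le) hxδ
    _ ≤ ε' := max_le (by rw [hx1, mul_one]) ENNReal.mul_div_le

theorem stmt_18 (d : ℕ) (hd : 0 < d) (p : ℝ) (hp : 1 ≤ p)
    (φ : ℕ → ℝ) (hGp : Gp d p φ)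
    (hlim : Tendsto (fun k : ℕ => φ k * (2 : ℝ) ^ (-((k : ℝ) * d) / p))
      atTop (nhds 0)) :
    ∀ X : Submodule ℂ ((Fin d → ℤ) → ℂ),
      (∀ lam ∈ X, ellpNorm d p lam < ⊤) →
      (∀ lam : (Fin d → ℤ) → ℂ, ellpNorm d p lam < ⊤ →
        (∀ ε : ℝ≥0∞, 0 < ε → ∃ x ∈ X, ellpNorm d p (lam - x) < ε) → lam ∈ X) →
      ¬ Module.Finite ℂ X →
      ∀ ε : ℝ≥0∞, 0 < ε →
        ∃ x ∈ X, ellpNorm d p x = 1 ∧ mNorm d p φ x < ε :=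
  stmt_18_general d p hp φ hGp hlim
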